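/- Let (G,σ) be a signed graph and let k, d be positive integers with 2d ≤ k and gcd(k,d) = 1. If (G,σ) has a circular (k/d)-coloring all of whose used colors are rational numbers admitting a common odd denominator m (i.e., m·f(v) ∈ ℤ for all vertices v), then (G,σ) has a (k, d)-coloring. -/
import Mathlib


variable {V : Type*}

/-- A signature of a graph `G`: a symmetric function assigning `+1` or `-1` to each edge. -/
def IsSignature (G : SimpleGraph V) (σ : V → V → ℤ) : Prop :=
  (∀ v w, σ v w = σ w v) ∧ ∀ v w, G.Adj v w → σ v w = 1 ∨ σ v w = -1

/-- `c : V → ZMod k` is a `(k,d)`-coloring of the signed graph `(G,σ)`: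
for every edge `vw`, `|c v - σ(vw) * c w|_k ≥ d`, where `|x|_k = min([x]_k, [-x]_k)`. -/
def IsKDColoring (G : SimpleGraph V) (σ : V → V → ℤ) (k d : ℕ) (c : V → ZMod k) : Prop :=
  ∀ v w, G.Adj v w →
    d ≤ min (ZMod.val (c v - (σ v w : ZMod k) * c w))
            (ZMod.val (-(c v - (σ v w : ZMod k) * c w)))

/-- `(G,σ)` has a `(k,d)`-coloring (with the standing assumptions `k,d ≥ 1`, `k ≥ 2d`). -/
def HasKDColoring (G : SimpleGraph V) (σ : V → V → ℤ) (k d : ℕ) : Prop :=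
  0 < k ∧ 0 < d ∧ 2 * d ≤ k ∧ ∃ c : V → ZMod k, IsKDColoring G σ k d c

/-- The circular chromatic number of a signed graph: the infimum of `k/d` over all
pairs `(k,d)` for which a `(k,d)`-coloring exists. -/
noncomputable def chiC (G : SimpleGraph V) (σ : V → V → ℤ) : ℝ :=
  sInf { r : ℝ | ∃ k d : ℕ, HasKDColoring G σ k d ∧ r = (k : ℝ) / d }

/-- The chromatic number of a signed graph: the least `k` with a `(k,1)`-coloring. -/
noncomputable def chi (G : SimpleGraph V) (σ : V → V → ℤ) : ℕ :=
  sInf { k : ℕ | HasKDColoring G σ k 1 }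

/-- A circular `r`-coloring of the signed graph `(G,σ)`: a map `f : V → [0,r)` such
that for each edge `xy`, if `σ(xy) = 1` then `1 ≤ |f x - f y| ≤ r - 1`, and if
`σ(xy) = -1` then `1 ≤ |f x + f y - r| ≤ r - 1`. -/
def IsCircularColoring (G : SimpleGraph V) (σ : V → V → ℤ) (r : ℝ) (f : V → ℝ) : Prop :=
  (∀ v, 0 ≤ f v ∧ f v < r) ∧
  ∀ v w, G.Adj v w →
    (σ v w = 1 → 1 ≤ |f v - f w| ∧ |f v - f w| ≤ r - 1) ∧
    (σ v w = -1 → 1 ≤ |f v + f w - r| ∧ |f v + f w - r| ≤ r - 1)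

lemma aux_round_err (m : ℕ) (hm : Odd m) (x : ℝ) (w : ℤ)
    (hx : (m : ℝ) * x = w) : |x - round x| < 1/2 := by
  set t : ℤ := ⌊x + 1/2⌋ with ht
  have hnotint : (x + 1/2) ≠ (t : ℝ) := by
    intro h
    have h4 : (2 * w + m : ℤ) = 2 * ((m : ℤ) * t) := by
      have hr : ((2 * w + m : ℤ) : ℝ) = ((2 * ((m : ℤ) * t) : ℤ) : ℝ) := by
        push_cast
        nlinarith [hx, h]
      exact_mod_cast hr
    obtain ⟨j, hj⟩ := hm
    omega
  have hfracpos : 0 < Int.fract (x + 1/2) := by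
    rcases lt_or_eq_of_le (Int.fract_nonneg (x + 1/2)) with h | h
    · exact h
    · exfalso; apply hnotint
      rw [Int.fract] at h; rw [ht]; linarith
  have hfraclt : Int.fract (x + 1/2) < 1 := Int.fract_lt_one _
  have heq : x - round x = Int.fract (x + 1/2) - 1/2 := by
    rw [round_eq, Int.fract]; ring_nf
  rw [heq, abs_lt]; constructor <;> linarith

lemma aux_circle (dR kR s : ℝ) (hd : 0 < dR) (hk : 2 * dR ≤ kR)
    (h1 : dR ≤ |s|) (h2 : |s| ≤ kR - dR) (j : ℤ) : dR ≤ |s + j * kR| := by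
  rcases eq_or_ne j 0 with rfl | hj
  · simpa using h1
  · have hj1 : (1 : ℝ) ≤ |(j : ℝ)| := by
      have h0 : (1 : ℤ) ≤ |j| := Int.one_le_abs hj
      calc (1:ℝ) ≤ ((|j| : ℤ) : ℝ) := by exact_mod_cast h0
        _ = |(j:ℝ)| := by push_cast; simp
    have hk0 : 0 ≤ kR := by linarith
    have hkk : kR ≤ |(j : ℝ) * kR| := by
      rw [abs_mul, abs_of_nonneg hk0]; nlinarith
    have habs : |(j:ℝ) * kR| - |(-s)| ≤ |(j:ℝ) * kR - -s| :=
      abs_sub_abs_le_abs_sub _ _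
    have h5 : |(j:ℝ) * kR - -s| = |s + j * kR| := by
      rw [sub_neg_eq_add, add_comm]
    rw [abs_neg] at habs
    linarith [h5 ▸ habs]

lemma aux_zmod_one (k d : ℕ) (hk : 0 < k) (M : ℤ)
    (hM : ∀ q : ℤ, (d:ℤ) ≤ |M - q * k|) : d ≤ ((M : ZMod k)).val := by
  haveI : NeZero k := ⟨hk.ne'⟩
  have hv : ((((M : ZMod k)).val : ℤ)) = M % k := ZMod.val_intCast M
  have h0 : (0:ℤ) ≤ M % k := Int.emod_nonneg M (by exact_mod_cast hk.ne')
  have hq := hM (M / k)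
  have hmod : M - (M / k) * k = M % k := by rw [Int.emod_def]; ring
  rw [hmod, abs_of_nonneg h0] at hq
  have : (d:ℤ) ≤ (((M : ZMod k)).val : ℤ) := by rw [hv]; exact hq
  exact_mod_cast this

lemma aux_near (dR A B : ℝ) (h1 : dR ≤ |B|) (h2 : |A - B| < 1) : dR - 1 < |A| := by
  have h3 := abs_sub_abs_le_abs_sub B A
  have h4 : |B - A| = |A - B| := abs_sub_comm B A
  linarith

lemma aux_zmod (k d : ℕ) (hk : 0 < k) (N : ℤ)
    (h : ∀ q : ℤ, (d:ℤ) ≤ |N - q * k|) :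
    d ≤ min (((N : ZMod k)).val) ((-(N : ZMod k)).val) := by
  refine le_min (aux_zmod_one k d hk N h) ?_
  have hcast : (-(N : ZMod k)) = (((-N : ℤ)) : ZMod k) := by push_cast; ring
  rw [hcast]
  refine aux_zmod_one k d hk (-N) (fun q => ?_)
  have := h (-q)
  calc (d:ℤ) ≤ |N - (-q) * k| := this
    _ = |(-N) - q * k| := by rw [← abs_neg]; ring_nf

/-- If a signed graph has a circular `(k/d)`-coloring (with `gcd(k,d)=1`) all of whose
colors are rationals with a common odd denominator `m`, then it has a `(k,d)`-coloring. -/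
theorem hasKDColoring_of_circular_odd_denominator
    (G : SimpleGraph V) (σ : V → V → ℤ) (hσ : IsSignature G σ)
    (k d : ℕ) (hd : 0 < d) (hkd : 2 * d ≤ k) (hgcd : Nat.gcd k d = 1)
    (f : V → ℝ) (hf : IsCircularColoring G σ ((k : ℝ) / d) f)
    (m : ℕ) (hm : Odd m) (hm0 : 0 < m) (hden : ∀ v, ∃ z : ℤ, (m : ℝ) * f v = (z : ℝ)) :
    ∃ c : V → ZMod k, IsKDColoring G σ k d c := by
  have hk0 : 0 < k := by omega
  have hdR : (0:ℝ) < d := by exact_mod_cast hd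
  have hkR : 2 * (d:ℝ) ≤ k := by exact_mod_cast hkd
  choose z hz using hden
  set n : V → ℤ := fun v => round ((d:ℝ) * f v) with hn
  refine ⟨fun v => ((n v : ℤ) : ZMod k), ?_⟩
  intro v w hvw
  obtain ⟨hb, he⟩ := hf
  have herr : ∀ u, |(d:ℝ) * f u - n u| < 1/2 := by
    intro u
    refine aux_round_err m hm _ (d * z u) ?_
    push_cast
    rw [show (m:ℝ) * ((d:ℝ) * f u) = (d:ℝ) * ((m:ℝ) * f u) by ring, hz u]
  have hdk : (d:ℝ) * ((k:ℝ)/(d:ℝ)) = k := by field_simp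
  rcases hσ.2 v w hvw with h1 | h1
  · -- positive edge
    obtain ⟨ha, hb'⟩ := (he v w hvw).1 h1
    rw [h1]
    have hc : ((n v : ℤ) : ZMod k) - ((1:ℤ) : ZMod k) * ((n w : ℤ) : ZMod k)
        = ((n v - n w : ℤ) : ZMod k) := by push_cast; ring
    rw [hc]
    refine aux_zmod k d hk0 _ (fun q => ?_)
    -- real estimates
    have hxy1 : (d:ℝ) ≤ |(d:ℝ) * f v - (d:ℝ) * f w| := by
      rw [show (d:ℝ) * f v - (d:ℝ) * f w = (d:ℝ) * (f v - f w) by ring, abs_mul,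
        abs_of_nonneg hdR.le]
      nlinarith
    have hxy2 : |(d:ℝ) * f v - (d:ℝ) * f w| ≤ (k:ℝ) - d := by
      rw [show (d:ℝ) * f v - (d:ℝ) * f w = (d:ℝ) * (f v - f w) by ring, abs_mul,
        abs_of_nonneg hdR.le]
      nlinarith
    have hcir := aux_circle d k ((d:ℝ) * f v - (d:ℝ) * f w) hdR hkR hxy1 hxy2 (-q)
    push_cast at hcir
    have hclose : |((n v - n w - q * k : ℤ) : ℝ) - ((d:ℝ) * f v - (d:ℝ) * f w + -(q:ℝ) * (k:ℝ))| < 1 := by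
      have e1 := herr v; have e2 := herr w
      have hA : ((n v - n w - q * k : ℤ) : ℝ) = (n v : ℝ) - (n w : ℝ) - (q:ℝ) * (k:ℝ) := by push_cast; ring
      rw [hA, abs_lt]
      rw [abs_lt] at e1 e2
      constructor <;> linarith [e1.1, e1.2, e2.1, e2.2]
    have hfin := aux_near (d:ℝ) _ _ hcir hclose
    have : (d:ℤ) - 1 < |n v - n w - q * k| := by
      have := hfin
      rw [show |((n v - n w - q * k : ℤ) : ℝ)| = ((|n v - n w - q * k| : ℤ) : ℝ) by push_cast; simp] at this
      exact_mod_cast this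
    omega
  · -- negative edge
    obtain ⟨ha, hb'⟩ := (he v w hvw).2 h1
    rw [h1]
    have hc : ((n v : ℤ) : ZMod k) - ((-1:ℤ) : ZMod k) * ((n w : ℤ) : ZMod k)
        = ((n v + n w : ℤ) : ZMod k) := by push_cast; ring
    rw [hc]
    refine aux_zmod k d hk0 _ (fun q => ?_)
    have hs1 : (d:ℝ) ≤ |(d:ℝ) * f v + (d:ℝ) * f w - k| := by
      rw [show (d:ℝ) * f v + (d:ℝ) * f w - k = (d:ℝ) * (f v + f w - (k:ℝ)/d) by rw [mul_sub, hdk]; ring,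
        abs_mul, abs_of_nonneg hdR.le]
      nlinarith
    have hs2 : |(d:ℝ) * f v + (d:ℝ) * f w - k| ≤ (k:ℝ) - d := by
      rw [show (d:ℝ) * f v + (d:ℝ) * f w - k = (d:ℝ) * (f v + f w - (k:ℝ)/d) by rw [mul_sub, hdk]; ring,
        abs_mul, abs_of_nonneg hdR.le]
      nlinarith
    have hcir := aux_circle d k ((d:ℝ) * f v + (d:ℝ) * f w - k) hdR hkR hs1 hs2 (1 - q)
    have hcir' : (d:ℝ) ≤ |(d:ℝ) * f v + (d:ℝ) * f w - q * k| := by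
      have : (d:ℝ) * f v + (d:ℝ) * f w - k + ((1:ℤ) - q) * k
          = (d:ℝ) * f v + (d:ℝ) * f w - q * k := by push_cast; ring
      rw [← this]
      exact_mod_cast hcir
    have hclose : |((n v + n w - q * k : ℤ) : ℝ) - ((d:ℝ) * f v + (d:ℝ) * f w - (q:ℝ) * (k:ℝ))| < 1 := by
      have e1 := herr v; have e2 := herr w
      have hA : ((n v + n w - q * k : ℤ) : ℝ) = (n v : ℝ) + (n w : ℝ) - (q:ℝ) * (k:ℝ) := by push_cast; ring
      rw [hA, abs_lt]
      rw [abs_lt] at e1 e2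
      constructor <;> linarith [e1.1, e1.2, e2.1, e2.2]
    have hfin := aux_near (d:ℝ) _ _ hcir' hclose
    have : (d:ℤ) - 1 < |n v + n w - q * k| := by
      rw [show |((n v + n w - q * k : ℤ) : ℝ)| = ((|n v + n w - q * k| : ℤ) : ℝ) by push_cast; simp] at hfin
      exact_mod_cast hfin
    omega
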